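/- arXiv:2109.11018 — 3 statements merged into one kernel-verified Lean document; each statement's English description precedes it below -/
import Mathlib

section
/- There do not exist weights w_n, w_c ∈ [0,1] with w_n + w_c = 1 such that w_n·(1/3) + w_c·(1/3) > max(w_n·(1/6) + w_c·(1/2), w_n·(1/2) + w_c·(1/6)). In other words, for the action probabilities sq_n = (1/6, 1/3, 1/2) and sq_c = (1/2, 1/3, 1/6) over three actions, no weighted-average combination makes the middle action's probability strictly exceed the probabilities of both other actions. -/
/-- For the action probabilities `sq_n = (1/6, 1/3, 1/2)` and `sq_c = (1/2, 1/3, 1/6)`,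
no weighted-average combination with weights `w_n, w_c ∈ [0,1]`, `w_n + w_c = 1`,
makes the middle action's probability strictly exceed both other actions' probabilities. -/
theorem no_WA_compromise :
    ¬ ∃ wn wc : ℝ, wn ∈ Set.Icc (0:ℝ) 1 ∧ wc ∈ Set.Icc (0:ℝ) 1 ∧ wn + wc = 1 ∧
      wn * (1/3) + wc * (1/3) >
        max (wn * (1/6) + wc * (1/2)) (wn * (1/2) + wc * (1/6)) := by
  rintro ⟨wn, wc, _, _, hsum, h⟩
  rw [gt_iff_lt, max_lt_iff] at h
  obtain ⟨h1, h2⟩ := h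
  linarith
end

section
/- Let k ≥ 2 and let C be the k×k contrast matrix with C i i = 1 and C i j = −1/(k−1) for i ≠ j. Suppose f : Fin k → Fin k satisfies, for every j and every i ≠ f(j), (C·e_j)_i < (C·e_j)_{f(j)} (i.e., f(j) is the strictly maximal coordinate of the valence vector C·e_j). Then f is the identity map, and consequently for every probability mass function p on Fin k, the pushforward of p under f equals p. Hence the MDFT model with evaluation matrix M = identity, attribute-selection distribution p, zero initial preference, and a single deliberation step induces the choice distribution p over the k options. -/
/-- If `f : Fin k → Fin k` sends each attribute `j` to the strictly maximal coordinate
of the valence vector `C · e_j` (where `C` is the `k × k` contrast matrix, `k ≥ 2`),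
then `f` is the identity, and consequently the pushforward under `f` of any probability
mass function `p` on `Fin k` equals `p`: the one-step MDFT model with identity evaluation
matrix and attribute-selection distribution `p` induces the choice distribution `p`. -/
theorem mdft_induces_any_distribution (k : ℕ) (hk : 2 ≤ k)
    (C : Matrix (Fin k) (Fin k) ℝ)
    (hC : ∀ i j, C i j = if i = j then 1 else -1 / ((k : ℝ) - 1))
    (f : Fin k → Fin k)
    (hf : ∀ j, ∀ i, i ≠ f j →
      (C.mulVec (Pi.single j 1)) i < (C.mulVec (Pi.single j 1)) (f j)) :
    f = id ∧ ∀ p : PMF (Fin k), p.map f = p := by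
  have hcol : ∀ i j, C.mulVec (Pi.single j 1) i = C i j := by
    intro i j
    simp [Matrix.mulVec_single, mul_one]
  have hfid : f = id := by
    funext j
    by_contra h
    have h' : j ≠ f j := fun e => h e.symm
    have := hf j j h'
    rw [hcol, hcol, hC j j, hC (f j) j, if_pos rfl, if_neg (show f j ≠ j from h)] at this
    have hk1 : (1:ℝ) ≤ (k:ℝ) - 1 := by
      have : (2:ℝ) ≤ (k:ℝ) := by exact_mod_cast hk
      linarith
    have : (-1 : ℝ) / ((k:ℝ) - 1) ≤ 0 := by
      apply div_nonpos_of_nonpos_of_nonneg <;> linarith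
    linarith
  refine ⟨hfid, fun p => ?_⟩
  rw [hfid, PMF.map_id]
end

section
/- Let k ≥ 2, let C be the k×k contrast matrix with C i i = 1 and C i j = −1/(k−1) for i ≠ j, fix an option a ∈ Fin k, and let M be the k×2 real matrix with M i j = 1 if i = a and M i j = 0 otherwise. Then for every attention weight vector W ∈ ℝ² with nonnegative entries summing to 1, the valence vector C·(M·W) attains its strict maximum at coordinate a; that is, (C·(M·W))_a > (C·(M·W))_i for all i ≠ a. Hence, regardless of which attribute is attended at any deliberation step, the MDFT model selects option a, so MDFT can model the degenerate (deterministic) choice distribution concentrated at a. -/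
/-- With the `k × k` contrast matrix `C` (`k ≥ 2`) and the `k × 2` evaluation matrix `M`
whose row `a` is all ones and whose other rows are zero, for every attention weight
vector `W ∈ ℝ²` with nonnegative entries summing to `1`, the valence vector
`C · (M · W)` attains its strict maximum at coordinate `a`: MDFT deterministically
selects option `a`, modeling the Greedy (point-mass) choice distribution. -/
theorem mdft_models_greedy (k : ℕ) (hk : 2 ≤ k)
    (C : Matrix (Fin k) (Fin k) ℝ)
    (hC : ∀ i j, C i j = if i = j then 1 else -1 / ((k : ℝ) - 1))
    (a : Fin k)
    (M : Matrix (Fin k) (Fin 2) ℝ)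
    (hM : ∀ i j, M i j = if i = a then 1 else 0)
    (W : Fin 2 → ℝ) (hW : ∀ j, 0 ≤ W j) (hWsum : ∑ j, W j = 1) :
    ∀ i, i ≠ a → (C.mulVec (M.mulVec W)) i < (C.mulVec (M.mulVec W)) a := by
  intro i hi
  have hv : M.mulVec W = fun x => if x = a then 1 else 0 := by
    funext x
    simp only [Matrix.mulVec, dotProduct, hM]
    rw [Fin.sum_univ_two] at hWsum
    by_cases hx : x = a <;> simp [hx, Fin.sum_univ_two, hWsum]
  have hc : ∀ x, (C.mulVec (M.mulVec W)) x = C x a := by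
    intro x
    rw [hv]
    simp [Matrix.mulVec, dotProduct, mul_ite, Finset.sum_ite_eq']
  rw [hc i, hc a, hC i a, hC a a, if_pos rfl, if_neg hi]
  have h1 : (1 : ℝ) ≤ (k : ℝ) - 1 := by
    have : (2 : ℝ) ≤ (k : ℝ) := by exact_mod_cast hk
    linarith
  have : -1 / ((k : ℝ) - 1) ≤ 0 := by
    apply div_nonpos_of_nonpos_of_nonneg <;> linarith
  linarith
end
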